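/- Consider the entire function D(z) := z·sin z + 2·cos z − 2. Then (a) D(2kπ) = 0 for every positive integer k; and (b) there exist a constant C > 0 and N ∈ ℕ such that for every integer k ≥ N, D has exactly one zero z ∈ ℂ in the open disc {z ∈ ℂ : |z − (2k−1)π| < C/k}. In particular the zeros of D near odd multiples of π satisfy λ_k = (2k−1)π + O(1/k). -/

import Mathlib

/-!
Write `x = (2k-1)π`, so that `cos x = -1`. The addition formulas give
`D(x + w) = -2 cos(w/2) g(w)` with `g(w) = localFactor x w = (x + w) sin(w/2) + 2 cos(w/2)`,
and `cos(w/2)` does not vanish for `|w| < 2`. On the unit disc `g'(w) = (x + w) cos(w/2)/2` stays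
within `|x|/8 + 5/8` of `x/2`, so `g` is injective there once `|x| ≥ 2`. On the real axis
`g(0) = 2 > 0` while `g(-r) < 0` as soon as `(x - r) r > 2π` (Jordan's inequality
`sin(r/2) ≥ r/π`), which for `r = 2/k` holds when `k ≥ 2`; the intermediate value theorem gives
the zero.
-/

/-- The characteristic function `D(z) = z sin z + 2 cos z − 2`. -/
noncomputable def Dfun (z : ℂ) : ℂ := z * Complex.sin z + 2 * Complex.cos z - 2

open Complex Metric Set
open scoped Real

theorem Dfun_nat_mul_two_pi (k : ℕ) : Dfun (k * (2 * π)) = 0 := by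
  have hsin : sin (k * (2 * π)) = 0 := by
    rw [show (k : ℂ) * (2 * π) = (2 * k : ℕ) * π by push_cast; ring, sin_nat_mul_pi]
  rw [Dfun, hsin, cos_nat_mul_two_pi]
  ring

theorem norm_cos_sub_one_le_sq {u : ℂ} (hu : ‖u‖ ≤ 1) : ‖cos u - 1‖ ≤ ‖u‖ ^ 2 := by
  have hu4 : ‖u‖ ^ 4 ≤ ‖u‖ ^ 2 := pow_le_pow_of_le_one (norm_nonneg u) hu (by norm_num)
  calc ‖cos u - 1‖ = ‖(cos u - (1 - u ^ 2 / 2)) + -(u ^ 2 / 2)‖ := by ring_nf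
    _ ≤ ‖cos u - (1 - u ^ 2 / 2)‖ + ‖u ^ 2 / 2‖ := by rw [← norm_neg (u ^ 2 / 2)]; apply norm_add_le
    _ ≤ ‖u‖ ^ 4 * (5 / 96) + ‖u‖ ^ 2 / 2 := by
        gcongr
        · exact cos_bound hu
        · simp [norm_pow]
    _ ≤ ‖u‖ ^ 2 := by linarith [sq_nonneg ‖u‖]

theorem Convex.injOn_of_hasDerivWithinAt_of_norm_sub_le {𝕜 F : Type*} [RCLike 𝕜]
    [NormedAddCommGroup F] [NormedSpace 𝕜 F] {f f' : 𝕜 → F} {s : Set 𝕜} (hs : Convex ℝ s)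
    {a : F} {C : ℝ} (hf : ∀ x ∈ s, HasDerivWithinAt f (f' x) s x)
    (hbound : ∀ x ∈ s, ‖f' x - a‖ ≤ C) (hC : C < ‖a‖) : InjOn f s := by
  intro x hx y hy hxy
  have hg : ∀ z ∈ s, HasDerivWithinAt (fun z ↦ f z - z • a) (f' z - a) s z := fun z hz ↦ by
    have h := (hf z hz).sub ((hasDerivWithinAt_id z s).smul_const a)
    rw [one_smul] at h
    exact h
  have key := hs.norm_image_sub_le_of_norm_hasDerivWithin_le hg hbound hx hy
  rw [hxy, sub_sub_sub_cancel_left, ← sub_smul, norm_smul, norm_sub_rev x y] at key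
  by_contra hne
  have hpos : 0 < ‖y - x‖ := norm_pos_iff.2 (sub_ne_zero.2 (Ne.symm hne))
  nlinarith

noncomputable def localFactor (x w : ℂ) : ℂ := (x + w) * sin (w / 2) + 2 * cos (w / 2)

theorem Dfun_add_of_cos_eq_neg_one {x : ℂ} (hx : cos x = -1) (w : ℂ) :
    Dfun (x + w) = -2 * cos (w / 2) * localFactor x w := by
  have hsx : sin x = 0 := by
    have h := sin_sq_add_cos_sq x
    rw [hx] at h
    exact pow_eq_zero_iff two_ne_zero |>.1 (by linear_combination h)
  have hsin : sin w = 2 * sin (w / 2) * cos (w / 2) := by rw [← sin_two_mul]; ring_nf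
  have hcos : cos w = 2 * cos (w / 2) ^ 2 - 1 := by rw [← cos_two_mul]; ring_nf
  rw [Dfun, localFactor, sin_add, cos_add, hx, hsx, hsin, hcos]
  ring

theorem Dfun_add_eq_zero_iff {x w : ℂ} (hx : cos x = -1) (hw : ‖w‖ < 2) :
    Dfun (x + w) = 0 ↔ localFactor x w = 0 := by
  have hw2 : ‖w / 2‖ < 1 := by rw [norm_div, Complex.norm_ofNat]; linarith
  have hcos : cos (w / 2) ≠ 0 := by
    intro h
    have := norm_cos_sub_one_le_sq hw2.le
    rw [h, zero_sub, norm_neg, norm_one] at this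
    nlinarith [norm_nonneg (w / 2)]
  rw [Dfun_add_of_cos_eq_neg_one hx]
  simp [hcos]

theorem hasDerivAt_localFactor (x w : ℂ) :
    HasDerivAt (localFactor x) ((x + w) * cos (w / 2) / 2) w := by
  have hhalf : HasDerivAt (fun w : ℂ ↦ w / 2) (1 / 2) w := by
    simpa using (hasDerivAt_id w).div_const 2
  have h : HasDerivAt (localFactor x)
      (1 * sin (w / 2) + (x + w) * (cos (w / 2) * (1 / 2)) + 2 * (-sin (w / 2) * (1 / 2))) w :=
    (((hasDerivAt_id' w).const_add x).mul hhalf.csin).add (hhalf.ccos.const_mul 2)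
  exact h.congr_deriv (by ring)

theorem norm_deriv_localFactor_sub_le (x : ℂ) {w : ℂ} (hw : ‖w‖ ≤ 1) :
    ‖(x + w) * cos (w / 2) / 2 - x / 2‖ ≤ ‖x‖ / 8 + 5 / 8 := by
  have hw2 : ‖w / 2‖ ≤ 1 / 2 := by rw [norm_div, Complex.norm_ofNat]; linarith
  have hcos1 : ‖cos (w / 2) - 1‖ ≤ 1 / 4 := by
    have := norm_cos_sub_one_le_sq (hw2.trans (by norm_num))
    nlinarith [norm_nonneg (w / 2)]
  have hcos : ‖cos (w / 2)‖ ≤ 5 / 4 := by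
    calc ‖cos (w / 2)‖ = ‖(cos (w / 2) - 1) + 1‖ := by ring_nf
      _ ≤ ‖cos (w / 2) - 1‖ + ‖(1 : ℂ)‖ := norm_add_le _ _
      _ ≤ 5 / 4 := by rw [norm_one]; linarith
  calc ‖(x + w) * cos (w / 2) / 2 - x / 2‖
        = ‖x * (cos (w / 2) - 1) / 2 + w * cos (w / 2) / 2‖ := by ring_nf
    _ ≤ ‖x * (cos (w / 2) - 1) / 2‖ + ‖w * cos (w / 2) / 2‖ := norm_add_le _ _
    _ = ‖x‖ * ‖cos (w / 2) - 1‖ / 2 + ‖w‖ * ‖cos (w / 2)‖ / 2 := by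
        simp only [norm_div, norm_mul, Complex.norm_ofNat]
    _ ≤ ‖x‖ * (1 / 4) / 2 + 1 * (5 / 4) / 2 := by gcongr
    _ = ‖x‖ / 8 + 5 / 8 := by ring

theorem localFactor_injOn_ball {x : ℂ} (hx : 2 ≤ ‖x‖) : InjOn (localFactor x) (ball 0 1) := by
  refine (convex_ball 0 1).injOn_of_hasDerivWithinAt_of_norm_sub_le (a := x / 2)
    (fun w _ ↦ (hasDerivAt_localFactor x w).hasDerivWithinAt)
    (fun w hw ↦ norm_deriv_localFactor_sub_le x (mem_ball_zero_iff.1 hw).le) ?_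
  rw [norm_div, Complex.norm_ofNat]
  linarith

theorem localFactor_ofReal (x t : ℝ) :
    localFactor x t = ((x + t) * Real.sin (t / 2) + 2 * Real.cos (t / 2) : ℝ) := by
  simp [localFactor, ofReal_sin, ofReal_cos]

theorem exists_localFactor_eq_zero {x r : ℝ} (hr : 0 < r) (hrπ : r ≤ π)
    (hxr : 2 * π < (x - r) * r) : ∃ t ∈ Ioo (-r) 0, localFactor x t = 0 := by
  set f : ℝ → ℝ := fun t ↦ (x + t) * Real.sin (t / 2) + 2 * Real.cos (t / 2)
  have hf0 : f 0 = 2 := by simp [f]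
  have hfr : f (-r) < 0 := by
    have hjordan : r / π ≤ Real.sin (r / 2) := by
      have := Real.mul_le_sin (x := r / 2) (by linarith) (by linarith)
      rwa [show 2 / π * (r / 2) = r / π by ring] at this
    have hxr' : 0 < x - r := pos_of_mul_pos_left (by linarith [Real.pi_pos]) hr.le
    have hprod : 2 < (x - r) * Real.sin (r / 2) := by
      calc (2 : ℝ) < (x - r) * r / π := by rw [lt_div_iff₀ Real.pi_pos]; linarith
        _ ≤ (x - r) * Real.sin (r / 2) := by rw [mul_div_assoc]; gcongr
    have hfr_eq : f (-r) = -((x - r) * Real.sin (r / 2)) + 2 * Real.cos (r / 2) := by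
      simp only [f, neg_div, Real.sin_neg, Real.cos_neg]
      ring
    rw [hfr_eq]
    linarith [Real.cos_le_one (r / 2)]
  obtain ⟨t, ht, hft⟩ :=
    intermediate_value_Ioo (by linarith) (by fun_prop : Continuous f).continuousOn
      (show (0 : ℝ) ∈ Ioo (f (-r)) (f 0) by rw [hf0]; exact ⟨hfr, two_pos⟩)
  exact ⟨t, ht, by rw [localFactor_ofReal]; exact_mod_cast hft⟩

theorem existsUnique_Dfun_eq_zero_ball {x r : ℝ} (hx : cos (x : ℂ) = -1) (hr : 0 < r)
    (hr1 : r ≤ 1) (hxr : 2 * π < (x - r) * r) : ∃! z : ℂ, ‖z - x‖ < r ∧ Dfun z = 0 := by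
  obtain ⟨t, ⟨htr, ht0⟩, hzero⟩ :=
    exists_localFactor_eq_zero hr (by linarith [Real.pi_gt_three]) hxr
  have hx2 : 2 ≤ ‖(x : ℂ)‖ := by
    rw [norm_real, Real.norm_eq_abs]
    nlinarith [le_abs_self x, Real.pi_gt_three]
  have ht : ‖(t : ℂ)‖ < r := by rw [norm_real, Real.norm_eq_abs, abs_lt]; constructor <;> linarith
  refine ⟨x + t, ⟨by simpa using ht, (Dfun_add_eq_zero_iff hx (by linarith)).2 hzero⟩, ?_⟩
  rintro z ⟨hz, hDz⟩
  rw [← add_sub_cancel (x : ℂ) z, Dfun_add_eq_zero_iff hx (by linarith)] at hDz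
  have := localFactor_injOn_ball hx2 (mem_ball_zero_iff.2 (by linarith))
    (mem_ball_zero_iff.2 (by linarith)) (hDz.trans hzero.symm)
  rw [← this, add_sub_cancel]

/-- (a) `D(2kπ) = 0` for every positive integer `k`; (b) there are `C > 0` and `N` such that
for every `k ≥ N`, `D` has exactly one zero in the open disc of radius `C/k` around
`(2k−1)π`. -/
theorem stmt16 :
    (∀ k : ℕ, 0 < k → Dfun ((2 * (k:ℝ) * Real.pi : ℝ) : ℂ) = 0) ∧
    (∃ C : ℝ, 0 < C ∧ ∃ N : ℕ, ∀ k : ℕ, N ≤ k →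
      ∃! z : ℂ, ‖z - (((2 * (k:ℝ) - 1) * Real.pi : ℝ) : ℂ)‖ < C / (k:ℝ) ∧ Dfun z = 0) := by
  refine ⟨fun k _ ↦ ?_, 2, two_pos, 2, fun k hk ↦ ?_⟩
  · rw [show (((2 * k * π : ℝ)) : ℂ) = k * (2 * π) by push_cast; ring]
    exact Dfun_nat_mul_two_pi k
  · have hk : (2 : ℝ) ≤ k := by exact_mod_cast hk
    have hr0 : 0 < 2 / (k : ℝ) := by positivity
    have hr1 : 2 / (k : ℝ) ≤ 1 := by rw [div_le_one (by positivity)]; exact hk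
    have hrk : 2 / (k : ℝ) * k = 2 := div_mul_cancel₀ 2 (by positivity)
    refine existsUnique_Dfun_eq_zero_ball ?_ hr0 hr1 ?_
    · rw [show (((2 * k - 1) * π : ℝ) : ℂ) = k * (2 * π) - π by push_cast; ring]
      exact cos_nat_mul_two_pi_sub_pi k
    · -- with `r = 2/k`, `((2k-1)π - r) r = 4π - π r - r² ≥ 3π - 1`
      nlinarith [Real.pi_gt_three]
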